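/- Let d ∈ ℕ, c > 0, p > 0. Suppose U : ℝ^d → ℝ_+^d, H is a real Hilbert space, and ψ : ℝ^d × ℝ_+^d → H satisfy ⟪ψ(x, U(x)), ψ(z, u)⟫ = exp(−c · Σ_{i=1}^d u_i · |x_i − z_i|^p) for all x, z ∈ ℝ^d and u ∈ ℝ_+^d. Then the set {ψ(x, U(x)) : x ∈ ℝ^d} ⊆ H contains an ε-orthonormal subset of size n for every ε > 0 and every n ∈ ℕ. -/

import Mathlib

/-- A set `S` in a real inner product space is `ε`-orthonormal if all its elements are
unit vectors and any two distinct elements have inner product of magnitude at most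
`ε`. -/
def EpsOrthonormal {H : Type*} [NormedAddCommGroup H] [InnerProductSpace ℝ H]
    (ε : ℝ) (S : Set H) : Prop :=
  (∀ v ∈ S, ‖v‖ = 1) ∧ ∀ v ∈ S, ∀ v' ∈ S, v ≠ v' → |(inner ℝ v v' : ℝ)| ≤ ε

/-- Let `d ∈ ℕ`, `c > 0`, `p > 0`.  Suppose `U : ℝ^d → ℝ_+^d`, `H` a real
Hilbert space, and `ψ : ℝ^d × ℝ_+^d → H` satisfy
`⟪ψ(x, U x), ψ(z, u)⟫ = exp (-c * ∑ i, u i * |x i - z i| ^ p)` for all `x, z, u`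
(with `u` in the non-negative orthant).  Then the set `{ψ(x, U x) : x ∈ ℝ^d}` contains
an `ε`-orthonormal subset of size `n` for every `ε > 0` and every `n ∈ ℕ`. -/
theorem stmt17 (d : ℕ) (hd : 0 < d) (c p : ℝ) (hc : 0 < c) (hp : 0 < p)
    (U : (Fin d → ℝ) → (Fin d → ℝ))
    (H : Type*) [NormedAddCommGroup H] [InnerProductSpace ℝ H] [CompleteSpace H]
    (ψ : (Fin d → ℝ) → (Fin d → ℝ) → H)
    (hU : ∀ x i, 0 ≤ U x i)
    (hψ : ∀ (x z u : Fin d → ℝ), (∀ i, 0 ≤ u i) →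
      (inner ℝ (ψ x (U x)) (ψ z u) : ℝ) =
        Real.exp (-c * ∑ i, u i * |x i - z i| ^ p)) :
    ∀ ε > (0 : ℝ), ∀ n : ℕ, ∃ S : Finset H,
      (S : Set H) ⊆ {h : H | ∃ x : Fin d → ℝ, h = ψ x (U x)} ∧
      S.card = n ∧ EpsOrthonormal ε (S : Set H) := by
  intro ε hε n
  classical
  have hp' : p ≠ 0 := ne_of_gt hp
  have hzero : (0:ℝ) ^ p = 0 := Real.zero_rpow hp'
  set i0 : Fin d := ⟨0, hd⟩ with hi0
  set pt : ℝ → (Fin d → ℝ) := fun t j => if j = i0 then t else 0 with hpt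
  -- the sum reduces to a single term for points on the i0-axis
  have hsum : ∀ s t : ℝ, ∀ u : Fin d → ℝ,
      ∑ i, u i * |pt s i - pt t i| ^ p = u i0 * |s - t| ^ p := by
    intro s t u
    rw [Fintype.sum_eq_single i0]
    · simp [hpt]
    · intro j hj
      simp [hpt, hj, hzero]
  -- every ψ x (U x) is a unit vector
  have hnorm : ∀ x, ‖ψ x (U x)‖ = 1 := by
    intro x
    have h := hψ x x (U x) (hU x)
    simp only [sub_self, abs_zero, hzero, mul_zero, Finset.sum_const_zero,
      neg_zero, Real.exp_zero] at h
    have h2 := real_inner_self_eq_norm_sq (ψ x (U x))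
    nlinarith [norm_nonneg (ψ x (U x)), sq_nonneg (‖ψ x (U x)‖ - 1),
      sq_nonneg (‖ψ x (U x)‖ + 1)]
  -- symmetry of the kernel
  have hsym : ∀ x z, ∑ i, U x i * |x i - z i| ^ p = ∑ i, U z i * |x i - z i| ^ p := by
    intro x z
    have h1 := hψ x z (U z) (hU z)
    have h2 := hψ z x (U x) (hU x)
    rw [real_inner_comm] at h2
    rw [h1] at h2
    have h3 := Real.exp_eq_exp.mp h2
    have h4 : ∑ i, U z i * |x i - z i| ^ p = ∑ i, U x i * |z i - x i| ^ p :=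
      mul_left_cancel₀ (neg_ne_zero.mpr (ne_of_gt hc)) h3
    rw [h4]
    apply Finset.sum_congr rfl
    intro i _
    rw [abs_sub_comm]
  -- the i0-component of U is constant along the i0-axis
  have hconst : ∀ t : ℝ, U (pt t) i0 = U (pt 0) i0 := by
    intro t
    rcases eq_or_ne t 0 with h | h
    · rw [h]
    · have h1 := hsym (pt t) (pt 0)
      rw [hsum, hsum] at h1
      have habs : (0:ℝ) < |t - 0| ^ p := by
        apply Real.rpow_pos_of_pos
        rw [sub_zero, abs_pos]; exact h
      exact mul_right_cancel₀ (ne_of_gt habs) h1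
  set a : ℝ := U (pt 0) i0 with ha
  have ha0 : 0 ≤ a := hU _ _
  -- a must be strictly positive
  have hapos : 0 < a := by
    rcases ha0.lt_or_eq with h | h
    · exact h
    · exfalso
      have h1 := hψ (pt 1) (pt 0) (U (pt 0)) (hU _)
      rw [hsum] at h1
      rw [← ha, ← h] at h1
      simp only [zero_mul, mul_zero, neg_zero, Real.exp_zero] at h1
      have heq : ψ (pt 1) (U (pt 1)) = ψ (pt 0) (U (pt 0)) :=
        (inner_eq_one_iff_of_norm_eq_one (hnorm (pt 1)) (hnorm (pt 0))).mp h1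
      have h2 := hψ (pt 1) (pt 0) (fun _ => 1) (fun _ => zero_le_one)
      have h3 := hψ (pt 0) (pt 0) (fun _ => 1) (fun _ => zero_le_one)
      rw [hsum] at h2
      rw [hsum] at h3
      rw [heq] at h2
      rw [h3] at h2
      simp only [sub_zero, sub_self, abs_zero, hzero, mul_zero, neg_zero,
        Real.exp_zero, abs_one, Real.one_rpow, one_mul, mul_one] at h2
      have : -c = 0 := (Real.exp_eq_one_iff _).mp h2.symm
      linarith
  -- choose the spacing T
  obtain ⟨L, hL⟩ : ∃ L : ℝ, L = max 0 (-Real.log ε) := ⟨_, rfl⟩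
  have hL0 : 0 ≤ L := hL ▸ le_max_left _ _
  have hLlog : -Real.log ε ≤ L := hL ▸ le_max_right _ _
  obtain ⟨B, hB⟩ : ∃ B : ℝ, B = L / (c * a) + 1 := ⟨_, rfl⟩
  have hBpos : (0:ℝ) < B := by
    have h0 : 0 ≤ L / (c * a) := div_nonneg hL0 (by positivity)
    rw [hB]; linarith
  obtain ⟨T, hT⟩ : ∃ T : ℝ, T = B ^ p⁻¹ := ⟨_, rfl⟩
  have hTpos : 0 < T := hT ▸ Real.rpow_pos_of_pos hBpos _
  have hTp : T ^ p = B := by rw [hT]; exact Real.rpow_inv_rpow (le_of_lt hBpos) hp'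
  -- the family of points
  set f : ℕ → H := fun k => ψ (pt (k * T)) (U (pt (k * T))) with hf
  -- inner products between distinct members
  have hinner : ∀ j k : ℕ,
      (inner ℝ (f j) (f k) : ℝ) = Real.exp (-c * (a * |(j:ℝ) * T - k * T| ^ p)) := by
    intro j k
    have h1 := hψ (pt (j * T)) (pt (k * T)) (U (pt (k * T))) (hU _)
    rw [hsum, hconst] at h1
    exact h1
  have hdist : ∀ j k : ℕ, j ≠ k → (0:ℝ) < |(j:ℝ) * T - k * T| ^ p := by
    intro j k hjk
    apply Real.rpow_pos_of_pos
    rw [abs_pos, sub_ne_zero]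
    intro hcon
    exact hjk (Nat.cast_injective (mul_right_cancel₀ (ne_of_gt hTpos) hcon))
  -- distinct indices give distinct vectors
  have hinj : ∀ j k : ℕ, j ≠ k → f j ≠ f k := by
    intro j k hjk hcon
    have h1 := hinner j k
    rw [hcon] at h1
    rw [real_inner_self_eq_norm_sq, hnorm, one_pow] at h1
    have h2 : -c * (a * |(j:ℝ) * T - k * T| ^ p) = 0 :=
      (Real.exp_eq_one_iff _).mp h1.symm
    have h3 := hdist j k hjk
    nlinarith [mul_pos hc (mul_pos hapos h3)]
  -- the inner product bound
  have hbound : ∀ j k : ℕ, j ≠ k →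
      Real.exp (-c * (a * |(j:ℝ) * T - k * T| ^ p)) ≤ ε := by
    intro j k hjk
    have habs1 : (1:ℝ) ≤ |(j:ℝ) - k| := by
      have hz : (1:ℤ) ≤ |(j:ℤ) - (k:ℤ)| := Int.one_le_abs (z := (j:ℤ) - k) (by omega)
      exact_mod_cast hz
    have h1 : T ≤ |(j:ℝ) * T - k * T| := by
      rw [← sub_mul, abs_mul, abs_of_pos hTpos]
      nlinarith [hTpos.le]
    have h2 : T ^ p ≤ |(j:ℝ) * T - k * T| ^ p :=
      Real.rpow_le_rpow hTpos.le h1 hp.le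
    have h2' : B ≤ |(j:ℝ) * T - k * T| ^ p := hTp ▸ h2
    have h3 : L ≤ c * (a * |(j:ℝ) * T - k * T| ^ p) := by
      have h4 : c * a * B = L + c * a := by
        rw [hB, mul_add, mul_one, mul_div_cancel₀]
        positivity
      nlinarith [mul_le_mul_of_nonneg_left h2' (mul_nonneg hc.le hapos.le),
        mul_pos hc hapos]
    have h5 : -c * (a * |(j:ℝ) * T - k * T| ^ p) ≤ Real.log ε := by nlinarith
    calc Real.exp (-c * (a * |(j:ℝ) * T - k * T| ^ p))
        ≤ Real.exp (Real.log ε) := Real.exp_le_exp.mpr h5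
      _ = ε := Real.exp_log hε
  -- assemble the finset
  refine ⟨(Finset.range n).image f, ?_, ?_, ?_, ?_⟩
  · intro v hv
    simp only [Finset.coe_image, Set.mem_image] at hv
    obtain ⟨k, _, hk⟩ := hv
    exact ⟨pt (k * T), hk.symm⟩
  · rw [Finset.card_image_of_injOn, Finset.card_range]
    intro j _ k _ hjk
    by_contra h
    exact hinj j k h hjk
  · intro v hv
    simp only [Finset.coe_image, Set.mem_image] at hv
    obtain ⟨k, _, hk⟩ := hv
    rw [← hk]
    exact hnorm _
  · intro v hv v' hv' hne
    simp only [Finset.coe_image, Set.mem_image] at hv hv'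
    obtain ⟨j, _, hj⟩ := hv
    obtain ⟨k, _, hk⟩ := hv'
    have hjk : j ≠ k := by
      intro h; rw [← hj, ← hk, h] at hne; exact hne rfl
    rw [← hj, ← hk, hinner j k, abs_of_pos (Real.exp_pos _)]
    exact hbound j k hjk
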